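/- Let n ≥ 2 and M = Mₙ the n-fuse function (assumed total). For all x ≤ y, x + M(x) ≤ y + M(y), with equality if and only if y < x + M(x). -/
import Mathlib


/-- Auxiliary values of the `n`-fuse function: `t₀(x) = 1`,
`t_{i+1}(x) = M(x - tᵢ(x))`. -/
def tfun (M : ℝ → ℝ) (x : ℝ) : ℕ → ℝ
  | 0 => 1
  | i + 1 => M (x - tfun M x i)

namespace MnAux

/-- The pairwise conclusion of the theorem. -/
def PairGood (M : ℝ → ℝ) (a b : ℝ) : Prop :=
  a + M a ≤ b + M b ∧ (a + M a = b + M b ↔ b < a + M a)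

/-- The auxiliary sequence is nonincreasing up to `n`. -/
def Sg (n : ℕ) (M : ℝ → ℝ) (x : ℝ) : Prop :=
  ∀ i, i < n → tfun M x (i + 1) ≤ tfun M x i

def Good (n : ℕ) (M : ℝ → ℝ) (y : ℝ) : Prop :=
  (∀ a, a ≤ y → PairGood M a y) ∧ (0 ≤ y → Sg n M y)

lemma tfun_succ (M : ℝ → ℝ) (x : ℝ) (i : ℕ) :
    tfun M x (i + 1) = M (x - tfun M x i) := rfl

lemma tfun_pos {M : ℝ → ℝ} (hpos : ∀ x : ℝ, 0 < M x) (x : ℝ) :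
    ∀ i, 0 < tfun M x i
  | 0 => one_pos
  | i + 1 => hpos _

lemma pairGood_refl {M : ℝ → ℝ} (hpos : ∀ x : ℝ, 0 < M x) (a : ℝ) :
    PairGood M a a :=
  ⟨le_rfl, iff_of_true rfl (by linarith [hpos a])⟩

lemma tfun_chain {n : ℕ} {M : ℝ → ℝ} {x : ℝ} (hS : Sg n M x) :
    ∀ i j, i ≤ j → j ≤ n → tfun M x j ≤ tfun M x i := by
  intro i j hij hjn
  induction j with
  | zero =>
    have : i = 0 := Nat.le_zero.mp hij
    simp [this]
  | succ j ih =>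
    rcases Nat.lt_or_ge i (j + 1) with h | h
    · calc tfun M x (j + 1) ≤ tfun M x j := hS j (by omega)
        _ ≤ tfun M x i := ih (by omega) (by omega)
    · have : i = j + 1 := le_antisymm hij h
      simp [this]

section main

variable {n : ℕ} {M : ℝ → ℝ}
variable (hn : 2 ≤ n)
variable (hneg : ∀ x : ℝ, x < 0 → M x = -x)
variable (heq : ∀ x : ℝ, 0 ≤ x → M x = tfun M x n / n)
variable (hpos : ∀ x : ℝ, 0 < M x)

include hn heq hpos in
lemma plateau (x y : ℝ) (hx : 0 ≤ x) (hSx : Sg n M x)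
    (hPb : ∀ a b : ℝ, a ≤ b → b < x → PairGood M a b)
    (hxy : x ≤ y) (hy : y < x + M x) :
    ∀ i, i ≤ n → tfun M y i = tfun M x i - i * (y - x) := by
  have hd0 : 0 ≤ y - x := by linarith
  have hdM : y - x < M x := by linarith
  have hn0 : (0:ℝ) < n := by
    have : (2:ℝ) ≤ n := by exact_mod_cast hn
    linarith
  have hnM : (n : ℝ) * M x = tfun M x n := by
    rw [heq x hx]
    field_simp
  intro i
  induction i with
  | zero => intro _; simp [tfun]
  | succ i ih =>
    intro hi
    have hif : tfun M y i = tfun M x i - i * (y - x) := ih (by omega)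
    have hkey : ((i : ℝ) + 1) * (y - x) < tfun M x (i + 1) := by
      have h1 : ((i : ℝ) + 1) * (y - x) ≤ (n : ℝ) * (y - x) := by
        apply mul_le_mul_of_nonneg_right _ hd0
        have : ((i + 1 : ℕ) : ℝ) ≤ (n : ℝ) := by exact_mod_cast (by omega : i + 1 ≤ n)
        push_cast at this
        linarith
      have h2 : (n : ℝ) * (y - x) < (n : ℝ) * M x :=
        mul_lt_mul_of_pos_left hdM hn0
      have h3 : tfun M x n ≤ tfun M x (i + 1) :=
        tfun_chain hSx (i + 1) n (by omega) le_rfl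
      linarith
    set z := x - tfun M x i with hz
    have hMz : M z = tfun M x (i + 1) := (tfun_succ M x i).symm
    have hz' : y - tfun M y i = z + ((i : ℝ) + 1) * (y - x) := by
      rw [hif, hz]; ring
    have hstep : tfun M x (i + 1) ≤ tfun M x i :=
      tfun_chain hSx i (i + 1) (by omega) (by omega)
    have hzx : z + ((i : ℝ) + 1) * (y - x) < x := by
      have : z + tfun M x i = x := by rw [hz]; ring
      linarith
    have hle : z ≤ z + ((i : ℝ) + 1) * (y - x) := by
      have : (0:ℝ) ≤ ((i : ℝ) + 1) * (y - x) := by positivity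
      linarith
    have hpg := hPb z (z + ((i : ℝ) + 1) * (y - x)) hle hzx
    have hlt : z + ((i : ℝ) + 1) * (y - x) < z + M z := by
      rw [hMz]; linarith
    have hgeq := hpg.2.mpr hlt
    show tfun M y (i + 1) = tfun M x (i + 1) - ((i + 1 : ℕ) : ℝ) * (y - x)
    rw [tfun_succ, hz']
    push_cast
    linarith

include hn hneg heq hpos in
lemma plateau_M (x y : ℝ) (hx : 0 ≤ x) (hSx : Sg n M x)
    (hPb : ∀ a b : ℝ, a ≤ b → b < x → PairGood M a b)
    (hxy : x ≤ y) (hy : y < x + M x) :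
    M y = M x - (y - x) := by
  have h := plateau hn heq hpos x y hx hSx hPb hxy hy n le_rfl
  have hy0 : 0 ≤ y := le_trans hx hxy
  have hn0 : (n : ℝ) ≠ 0 := by
    have : (2:ℝ) ≤ n := by exact_mod_cast hn
    linarith
  rw [heq y hy0, heq x hx, h]
  field_simp

include hn hneg heq hpos in
lemma plateau_S (x y : ℝ) (hx : 0 ≤ x) (hSx : Sg n M x)
    (hPb : ∀ a b : ℝ, a ≤ b → b < x → PairGood M a b)
    (hxy : x ≤ y) (hy : y < x + M x) :
    Sg n M y := by
  intro i hi
  have h1 := plateau hn heq hpos x y hx hSx hPb hxy hy i (by omega)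
  have h2 := plateau hn heq hpos x y hx hSx hPb hxy hy (i + 1) (by omega)
  have h3 := hSx i hi
  have hd0 : 0 ≤ y - x := by linarith
  rw [h1, h2]
  push_cast
  nlinarith

include hn hneg heq hpos in
lemma extend (x : ℝ) (hx : 0 ≤ x) (hGx : Good n M x)
    (hPb : ∀ a b : ℝ, a ≤ b → b < x → PairGood M a b)
    (y : ℝ) (hxy : x ≤ y) (hy : y < x + M x) : Good n M y := by
  have hSx := hGx.2 hx
  have hMy := plateau_M hn hneg heq hpos x y hx hSx hPb hxy hy
  have hgy : y + M y = x + M x := by linarith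
  constructor
  · intro a ha
    rcases eq_or_lt_of_le ha with rfl | hay
    · exact pairGood_refl hpos a
    · by_cases hax : a ≤ x
      · have hpa := hGx.1 a hax
        refine ⟨by linarith [hpa.1], ?_, ?_⟩
        · intro he
          linarith
        · intro hlt
          have h1 : x < a + M a := lt_of_le_of_lt hxy hlt
          have h2 := hpa.2.mpr h1
          linarith
      · push_neg at hax
        have hga : M a = M x - (a - x) :=
          plateau_M hn hneg heq hpos x a hx hSx hPb (le_of_lt hax) (by linarith)
        refine ⟨by linarith, ?_, ?_⟩ <;> intro <;> linarith
  · intro _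
    exact plateau_S hn hneg heq hpos x y hx hSx hPb hxy hy

include hn hneg heq hpos in
lemma good_neg (y : ℝ) (hy : y < 0) : Good n M y := by
  constructor
  · intro a ha
    have h1 := hneg y hy
    have h2 := hneg a (lt_of_le_of_lt ha hy)
    refine ⟨by linarith, ?_, ?_⟩ <;> intro <;> linarith
  · intro h; linarith

include hn hneg heq hpos in
lemma step (y : ℝ)
    (hPb : ∀ a b : ℝ, a ≤ b → b < y → PairGood M a b)
    (hSb : ∀ w : ℝ, w < y → 0 ≤ w → Sg n M w) : Good n M y := by
  rcases lt_or_ge y 0 with hy | hy0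
  · exact good_neg hn hneg heq hpos y hy
  by_cases hex : ∃ x : ℝ, x < y ∧ y < x + M x
  · obtain ⟨x, hxy, hyx⟩ := hex
    have hx0 : 0 ≤ x := by
      by_contra h
      push_neg at h
      have := hneg x h
      linarith
    have hGx : Good n M x :=
      ⟨fun a ha => hPb a x ha hxy, fun _ => hSb x hxy hx0⟩
    exact extend hn hneg heq hpos x hx0 hGx
      (fun a b hab hb => hPb a b hab (lt_trans hb hxy)) y (le_of_lt hxy) hyx
  · push_neg at hex
    constructor
    · intro a ha
      rcases eq_or_lt_of_le ha with rfl | hay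
      · exact pairGood_refl hpos a
      · have h1 := hex a hay
        have h2 := hpos y
        refine ⟨by linarith, ?_, ?_⟩ <;> intro <;> linarith
    · intro _ i hi
      have htp := tfun_pos hpos y i
      have hzy : y - tfun M y i < y := by linarith
      rw [tfun_succ]
      rcases lt_or_ge (y - tfun M y i) 0 with hzn | hzp
      · rw [hneg _ hzn]; linarith
      · have := hex _ hzy
        linarith

include hn hneg heq hpos in
lemma all_good : ∀ y : ℝ, Good n M y := by
  by_contra h
  push_neg at h
  obtain ⟨y₀, hy₀⟩ := h
  set B := {y : ℝ | ¬ Good n M y} with hB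
  have hBne : B.Nonempty := ⟨y₀, hy₀⟩
  have hB0 : ∀ z ∈ B, (0:ℝ) ≤ z := by
    intro z hz
    by_contra hzn
    push_neg at hzn
    exact hz (good_neg hn hneg heq hpos z hzn)
  have hbdd : BddBelow B := ⟨0, fun z hz => hB0 z hz⟩
  set b := sInf B with hb
  have hlow : ∀ w : ℝ, w < b → Good n M w := by
    intro w hw
    by_contra hwB
    exact absurd (csInf_le hbdd hwB) (not_le.mpr hw)
  have hGb : Good n M b :=
    step hn hneg heq hpos b (fun a c hac hc => (hlow c hc).1 a hac)
      (fun w hw h0 => (hlow w hw).2 h0)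
  have hb0 : 0 ≤ b := le_csInf hBne hB0
  have hmid : ∀ y : ℝ, b ≤ y → y < b + M b → Good n M y :=
    extend hn hneg heq hpos b hb0 hGb (fun a c hac hc => (hlow c hc).1 a hac)
  have hfin : b + M b ≤ b := by
    apply le_csInf hBne
    intro z hz
    by_contra hzl
    push_neg at hzl
    rcases lt_or_ge z b with h | h
    · exact hz (hlow z h)
    · exact hz (hmid z h hzl)
  linarith [hpos b]

end main

end MnAux

/-- For the total, positive-valued `n`-fuse function `Mₙ` (characterized by
`Mₙ(x) = -x` for `x < 0` and `Mₙ(x) = tₙ(x)/n` for `x ≥ 0`): for all `x ≤ y`,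
`x + Mₙ(x) ≤ y + Mₙ(y)`, with equality iff `y < x + Mₙ(x)`. -/
theorem Mn_sum_mono (n : ℕ) (hn : 2 ≤ n) (M : ℝ → ℝ)
    (hneg : ∀ x : ℝ, x < 0 → M x = -x)
    (heq : ∀ x : ℝ, 0 ≤ x → M x = tfun M x n / n)
    (hpos : ∀ x : ℝ, 0 < M x)
    (x y : ℝ) (hxy : x ≤ y) :
    x + M x ≤ y + M y ∧ (x + M x = y + M y ↔ y < x + M x) := by
  exact (MnAux.all_good hn hneg heq hpos y).1 x hxy
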